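/- The shuffle product is well-defined on the suffix abstraction: if suff_l(a₁…aₙ) = suff_l(b₁…bₘ), then for every word w, { suff_l(s) | s ∈ (a₁…aₙ) ⧢ w } = { suff_l(s) | s ∈ (b₁…bₘ) ⧢ w }. -/

import Mathlib

/-- Shuffle with synchronization: complementary heads may synchronize into `τ`. -/
def sh {Act : Type*} [DecidableEq Act] (τ : Act) (bar : Act → Act) :
    List Act → List Act → Set (List Act)
  | [], w' => {w'}
  | w, [] => {w}
  | a :: u, b :: v =>
    (fun s => a :: s) '' sh τ bar u (b :: v) ∪
    (fun s => b :: s) '' sh τ bar (a :: u) v ∪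
    (if b = bar a then (fun s => τ :: s) '' sh τ bar u v else ∅)

/-- `suff l w` is the suffix of `w` of length `min l |w|`. -/
def suff {Act : Type*} (l : ℕ) (w : List Act) : List Act := w.drop (w.length - l)

/-!
A shuffle of `x` with `w` is at least as long as `x`. So if `l ≤ |x|`, in a shuffle `s` of
`a :: x` with `w` the letter `a` (or the `τ` into which it synchronized) lies outside the last `l`
positions; deleting it (resp. putting back the partner letter of `w` in place of `τ`) gives a
shuffle of `x` with `w` with the same suffix of length `l`. Peeling off leading letters one at
a time, the suffixes of `a ⧢ w` are those of `suff l a ⧢ w`.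
-/

section Suffix

variable {Act : Type*}

theorem suff_cons_of_le {l : ℕ} {s : List Act} (h : l ≤ s.length) (a : Act) :
    suff l (a :: s) = suff l s := by
  simp only [suff, List.length_cons]
  rw [show s.length + 1 - l = s.length - l + 1 by omega, List.drop_succ_cons]

theorem suff_of_length_le {l : ℕ} {s : List Act} (h : s.length ≤ l) : suff l s = s := by
  simp [suff, Nat.sub_eq_zero_of_le h]

theorem length_suff (l : ℕ) (s : List Act) : (suff l s).length = min l s.length := by
  simp only [suff, List.length_drop]
  omega

theorem take_append_suff (l : ℕ) (s : List Act) : s.take (s.length - l) ++ suff l s = s :=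
  List.take_append_drop _ _

end Suffix

section Shuffle

variable {Act : Type*} [DecidableEq Act] (τ : Act) (bar : Act → Act)

@[simp] theorem sh_nil_left (w : List Act) : sh τ bar [] w = {w} := by
  cases w <;> rw [sh]

@[simp] theorem sh_cons_nil (a : Act) (u : List Act) : sh τ bar (a :: u) [] = {a :: u} := by
  simp [sh]

theorem mem_sh_cons_cons {a b : Act} {u v s : List Act} :
    s ∈ sh τ bar (a :: u) (b :: v) ↔
      (∃ t ∈ sh τ bar u (b :: v), a :: t = s) ∨ (∃ t ∈ sh τ bar (a :: u) v, b :: t = s) ∨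
        (b = bar a ∧ ∃ t ∈ sh τ bar u v, τ :: t = s) := by
  rw [sh]
  split_ifs <;> simp [*, or_assoc]

variable {τ bar}

theorem length_le_of_mem_sh {x w s : List Act} (hs : s ∈ sh τ bar x w) :
    x.length ≤ s.length := by
  induction x, w using sh.induct generalizing s with
  | case1 w => simp
  | case2 x hx =>
    obtain ⟨a, u, rfl⟩ := List.exists_cons_of_ne_nil hx
    simp_all
  | case3 a u b v ih₁ ih₂ ih₃ =>
    rcases (mem_sh_cons_cons τ bar).1 hs with ⟨t, ht, rfl⟩ | ⟨t, ht, rfl⟩ | ⟨-, t, ht, rfl⟩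
    · simpa using ih₁ ht
    · simpa using (ih₂ ht).trans (Nat.le_succ _)
    · simpa using ih₃ ht

theorem cons_mem_sh_left {x w t : List Act} (ht : t ∈ sh τ bar x w) (a : Act) :
    a :: t ∈ sh τ bar (a :: x) w := by
  cases w with
  | nil => cases x <;> simp_all
  | cons b v => exact (mem_sh_cons_cons τ bar).2 (.inl ⟨t, ht, rfl⟩)

theorem cons_mem_sh_right {x w t : List Act} (ht : t ∈ sh τ bar x w) (b : Act) :
    b :: t ∈ sh τ bar x (b :: w) := by
  cases x with
  | nil => simp_all
  | cons a u => exact (mem_sh_cons_cons τ bar).2 (.inr (.inl ⟨t, ht, rfl⟩))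

theorem exists_mem_sh_suff_eq_of_mem_sh_cons {l : ℕ} {x : List Act} (hx : l ≤ x.length)
    (a : Act) {w s : List Act} (hs : s ∈ sh τ bar (a :: x) w) :
    ∃ t ∈ sh τ bar x w, suff l t = suff l s := by
  induction w generalizing s with
  | nil => exact ⟨x, by cases x <;> simp, by simp_all [suff_cons_of_le hx]⟩
  | cons b v ih =>
    rcases (mem_sh_cons_cons τ bar).1 hs with ⟨t, ht, rfl⟩ | ⟨s', hs', rfl⟩ | ⟨-, t, ht, rfl⟩
    · exact ⟨t, ht, (suff_cons_of_le (hx.trans (length_le_of_mem_sh ht)) a).symm⟩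
    · obtain ⟨t, ht, htt⟩ := ih hs'
      refine ⟨b :: t, cons_mem_sh_right ht b, ?_⟩
      have hs'l : l ≤ s'.length := hx.trans ((Nat.le_succ _).trans (length_le_of_mem_sh hs'))
      rw [suff_cons_of_le (hx.trans (length_le_of_mem_sh ht)), suff_cons_of_le hs'l, htt]
    · have htl := hx.trans (length_le_of_mem_sh ht)
      exact ⟨b :: t, cons_mem_sh_right ht b, by rw [suff_cons_of_le htl, suff_cons_of_le htl]⟩

theorem image_suff_sh_cons {l : ℕ} {x : List Act} (hx : l ≤ x.length) (a : Act) (w : List Act) :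
    suff l '' sh τ bar (a :: x) w = suff l '' sh τ bar x w := by
  apply Set.Subset.antisymm
  · rintro _ ⟨s, hs, rfl⟩
    exact exists_mem_sh_suff_eq_of_mem_sh_cons hx a hs
  · rintro _ ⟨t, ht, rfl⟩
    exact ⟨a :: t, cons_mem_sh_left ht a, suff_cons_of_le (hx.trans (length_le_of_mem_sh ht)) a⟩

theorem image_suff_sh_append {l : ℕ} {x : List Act} (hx : l ≤ x.length) (u w : List Act) :
    suff l '' sh τ bar (u ++ x) w = suff l '' sh τ bar x w := by
  induction u with
  | nil => rfl
  | cons a u ih =>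
    rw [List.cons_append, image_suff_sh_cons (by simp only [List.length_append]; omega), ih]

theorem image_suff_sh_suff (l : ℕ) (a w : List Act) :
    suff l '' sh τ bar (suff l a) w = suff l '' sh τ bar a w := by
  by_cases ha : a.length ≤ l
  · rw [suff_of_length_le ha]
  · have hl : l ≤ (suff l a).length := by rw [length_suff]; omega
    have := image_suff_sh_append (τ := τ) (bar := bar) hl (a.take (a.length - l)) w
    rwa [take_append_suff, eq_comm] at this

end Shuffle

theorem shuffle_well_defined_suffix_general {Act : Type*} [DecidableEq Act] (τ : Act)
    (bar : Act → Act) (l : ℕ) (a b w : List Act)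
    (h : suff l a = suff l b) :
    (fun s => suff l s) '' sh τ bar a w = (fun s => suff l s) '' sh τ bar b w := by
  rw [← image_suff_sh_suff l a, h, image_suff_sh_suff]

theorem shuffle_well_defined_suffix {Act : Type*} [DecidableEq Act] (τ : Act)
    (bar : Act → Act) (hinv : ∀ a, bar (bar a) = a) (l : ℕ) (a b w : List Act)
    (h : suff l a = suff l b) :
    (fun s => suff l s) '' sh τ bar a w = (fun s => suff l s) '' sh τ bar b w :=
  shuffle_well_defined_suffix_general τ bar l a b w h
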